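/- arXiv:1411.0353 — 2 statements merged into one kernel-verified Lean document; each statement's English description precedes it below -/
import Mathlib

section
/- Let p, q, r, s be integers with |p| > q ≥ 2, |r| > s ≥ 2, gcd(p,q) = 1, gcd(r,s) = 1, rs = pq, and suppose (t^p - 1)(t^q - 1) divides (t^r - 1)(t^s - 1) in ℤ[t]. Then {|p|, q} = {|r|, s} and p·q = r·s (i.e., the torus knot parameters agree up to the standard identification). -/
open Polynomial

/-- Key step: if `(X^a-1)(X^b-1) ∣ (X^c-1)(X^d-1)` in `ℤ[X]` with `a > 0`,
then evaluating at a primitive `a`-th root of unity shows `a ∣ c` or `a ∣ d`. -/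
lemma torus_aux_dvd (a b c d : ℕ) (ha : 0 < a)
    (hdvd : ((X : ℤ[X]) ^ a - 1) * ((X : ℤ[X]) ^ b - 1) ∣
      ((X : ℤ[X]) ^ c - 1) * ((X : ℤ[X]) ^ d - 1)) :
    a ∣ c ∨ a ∣ d := by
  obtain ⟨g, hg⟩ := hdvd
  have hζ : IsPrimitiveRoot (Complex.exp (2 * Real.pi * Complex.I / a)) a :=
    Complex.isPrimitiveRoot_exp a ha.ne'
  set ζ := Complex.exp (2 * Real.pi * Complex.I / a) with hζdef
  have h0 : (ζ ^ c - 1) * (ζ ^ d - 1) = 0 := by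
    have h := congrArg (aeval ζ) hg
    simp only [map_mul, map_sub, map_pow, map_one, aeval_X] at h
    rw [h, hζ.pow_eq_one, sub_self, zero_mul, zero_mul]
  rcases mul_eq_zero.mp h0 with h | h
  · exact Or.inl (hζ.dvd_of_pow_eq_one c (by
      have := sub_eq_zero.mp h; simpa using this))
  · exact Or.inr (hζ.dvd_of_pow_eq_one d (by
      have := sub_eq_zero.mp h; simpa using this))

/-- If torus knot parameters `(p,q)` and `(r,s)` satisfy `rs = pq` and the
Alexander polynomial divisibility `(t^p-1)(t^q-1) ∣ (t^r-1)(t^s-1)`, then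
the parameters agree. -/
theorem torus_knot_alexander_divisibility
    (p q r s : ℤ) (hpq : q < |p|) (hq : 2 ≤ q) (hrs : s < |r|) (hs : 2 ≤ s)
    (hgcd1 : IsCoprime p q) (hgcd2 : IsCoprime r s) (hprod : r * s = p * q)
    (hdvd : ((X : ℤ[X]) ^ p.natAbs - 1) * ((X : ℤ[X]) ^ q.natAbs - 1) ∣
      ((X : ℤ[X]) ^ r.natAbs - 1) * ((X : ℤ[X]) ^ s.natAbs - 1)) :
    p.natAbs = r.natAbs ∧ q = s ∧ p * q = r * s := by
  set a := p.natAbs with hadef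
  set b := q.natAbs with hbdef
  set c := r.natAbs with hcdef
  set d := s.natAbs with hddef
  have hqb : (b : ℤ) = q := Int.natAbs_of_nonneg (by linarith)
  have hsd : (d : ℤ) = s := Int.natAbs_of_nonneg (by linarith)
  have hpa : (a : ℤ) = |p| := (Int.abs_eq_natAbs p).symm
  have hrc : (c : ℤ) = |r| := (Int.abs_eq_natAbs r).symm
  have hb2 : 2 ≤ b := by omega
  have hd2 : 2 ≤ d := by omega
  have hba : b < a := by
    have : (b : ℤ) < (a : ℤ) := by rw [hqb, hpa]; exact hpq
    exact_mod_cast this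
  have hdc : d < c := by
    have : (d : ℤ) < (c : ℤ) := by rw [hsd, hrc]; exact hrs
    exact_mod_cast this
  have hmul : c * d = a * b := by
    have := congrArg Int.natAbs hprod
    simpa [Int.natAbs_mul] using this
  have hcop1 : Nat.Coprime a b := Int.isCoprime_iff_gcd_eq_one.mp hgcd1
  have hcop2 : Nat.Coprime c d := Int.isCoprime_iff_gcd_eq_one.mp hgcd2
  -- a divides c or d
  have hA : a ∣ c ∨ a ∣ d := torus_aux_dvd a b c d (by omega) hdvd
  have hB : b ∣ c ∨ b ∣ d := torus_aux_dvd b a c d (by omega) (by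
    rwa [mul_comm] at hdvd)
  have hac : a ∣ c := by
    rcases hA with h | h
    · exact h
    · exfalso
      have had : a ≤ d := Nat.le_of_dvd (by omega) h
      nlinarith
  have hbd : b ∣ d := by
    rcases hB with h | h
    · exfalso
      have habc : a * b ∣ c := (Nat.Coprime.mul_dvd_of_dvd_of_dvd hcop1 hac h)
      have : a * b ≤ c := Nat.le_of_dvd (by omega) habc
      nlinarith
    · exact h
  obtain ⟨k, hk⟩ := hac
  obtain ⟨m, hm⟩ := hbd
  have hkm : k * m = 1 := by
    have h1 : a * b * (k * m) = a * b * 1 := by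
      rw [hk, hm] at hmul
      rw [mul_one]
      calc a * b * (k * m) = a * k * (b * m) := by ring
        _ = a * b := hmul
    exact Nat.eq_of_mul_eq_mul_left (Nat.mul_pos (by omega) (by omega)) h1
  have hk1 : k = 1 := Nat.dvd_one.mp ⟨m, hkm.symm⟩
  have hm1 : m = 1 := Nat.dvd_one.mp ⟨k, by rw [mul_comm]; exact hkm.symm⟩
  rw [hk1, mul_one] at hk
  rw [hm1, mul_one] at hm
  have hceq : a = c := hk.symm
  have hdeq : b = d := hm.symm
  refine ⟨hceq, ?_, hprod.symm⟩
  rw [← hqb, ← hsd, hdeq]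
end

section
/- Let G be a group generated by two subgroups G₁ and G₂, let f₁ ∈ Z(G₁) and f₂ ∈ Z(G₂) (centers), with f₂ ∈ G₁ and f₁ ∈ G₂. Let ρ: G → SL₂(ℂ) be a homomorphism with ρ(f₁) ∉ {I, -I} and ρ(f₂) ∉ {I, -I}. Then the image ρ(G) is abelian. -/
/-!
Two 2×2 matrices commute exactly when their traceless parts, written as vectors `(b, c, a - d)`
of `F³`, have vanishing cross product, i.e. are parallel. An element of `SL₂` other than `±1`
has nonzero traceless part, so its centralizer is abelian. Now `ρ(G₁)` centralizes `ρ(f₁)`, and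
`ρ(G₂)` lies in the abelian centralizer of `ρ(f₂)`, which also contains `ρ(f₁)`; hence all of
`ρ(G) = ρ(G₁ ⊔ G₂)` lies in the abelian centralizer of `ρ(f₁)`.
-/

open Matrix

theorem cross_eq_zero_of_cross_eq_zero {F : Type*} [Field F] {u v w : Fin 3 → F} (hu : u ≠ 0)
    (hv : u ⨯₃ v = 0) (hw : u ⨯₃ w = 0) : v ⨯₃ w = 0 := by
  have parallel {x : Fin 3 → F} (hx : u ⨯₃ x = 0) : ∃ a : F, a • u = x := by
    by_contra! h
    exact crossProduct_ne_zero_iff_linearIndependent.mpr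
      ((LinearIndependent.pair_iff' hu).mpr h) hx
  obtain ⟨a, rfl⟩ := parallel hv
  obtain ⟨b, rfl⟩ := parallel hw
  simp [cross_self]

namespace Matrix

def tracelessCoords {R : Type*} [Ring R] (A : Matrix (Fin 2) (Fin 2) R) : Fin 3 → R :=
  ![A 0 1, A 1 0, A 0 0 - A 1 1]

theorem commute_iff_tracelessCoords_cross_eq_zero {R : Type*} [CommRing R]
    {A B : Matrix (Fin 2) (Fin 2) R} :
    Commute A B ↔ A.tracelessCoords ⨯₃ B.tracelessCoords = 0 := by
  rw [A.eta_fin_two, B.eta_fin_two]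
  simp only [Commute, SemiconjBy, mul_fin_two, tracelessCoords, cross_apply, of_apply, cons_val',
    cons_val_zero, cons_val_one, cons_val, empty_val', cons_val_fin_one, cons_eq_zero_iff,
    zero_empty, and_true, ← Matrix.ext_iff, Fin.forall_fin_two]
  constructor
  · rintro ⟨⟨h00, h01⟩, h10, -⟩
    exact ⟨by linear_combination h10, by linear_combination h01, by linear_combination h00⟩
  · rintro ⟨c0, c1, c2⟩
    exact ⟨⟨by linear_combination c2, by linear_combination c1⟩, by linear_combination c0,
      by linear_combination -c2⟩

theorem commute_of_commute_of_tracelessCoords_ne_zero {F : Type*} [Field F]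
    {A B C : Matrix (Fin 2) (Fin 2) F} (hA : A.tracelessCoords ≠ 0) (hB : Commute A B)
    (hC : Commute A C) : Commute B C := by
  rw [commute_iff_tracelessCoords_cross_eq_zero] at *
  exact cross_eq_zero_of_cross_eq_zero hA hB hC

namespace SpecialLinearGroup

theorem tracelessCoords_ne_zero {R : Type*} [CommRing R] [NoZeroDivisors R]
    {M : SpecialLinearGroup (Fin 2) R} (h₁ : M ≠ 1) (h₂ : M ≠ -1) :
    (M : Matrix (Fin 2) (Fin 2) R).tracelessCoords ≠ 0 := by
  intro h
  simp only [tracelessCoords, cons_eq_zero_iff, zero_empty, and_true, sub_eq_zero] at h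
  obtain ⟨h01, h10, hdiag⟩ := h
  have hdet : M 0 0 * M 0 0 = 1 := by
    have := M.det_coe
    rw [det_fin_two, h01, ← hdiag] at this
    linear_combination this
  have hM : (M : Matrix (Fin 2) (Fin 2) R) = !![M 0 0, 0; 0, M 0 0] := by
    rw [M.1.eta_fin_two]; simp [h01, h10, hdiag]
  rcases mul_self_eq_one_iff.mp hdet with h | h
  · exact h₁ (Subtype.ext (by rw [hM, h]; exact one_fin_two.symm))
  · exact h₂ (Subtype.ext (by rw [hM, h]; simp [one_fin_two]))

theorem commute_of_commute_of_ne_one_of_ne_neg_one {F : Type*} [Field F]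
    {M A B : SpecialLinearGroup (Fin 2) F} (h₁ : M ≠ 1) (h₂ : M ≠ -1) (hA : Commute M A)
    (hB : Commute M B) : Commute A B :=
  Subtype.ext <| commute_of_commute_of_tracelessCoords_ne_zero (tracelessCoords_ne_zero h₁ h₂)
    (congrArg Subtype.val hA) (congrArg Subtype.val hB)

end SpecialLinearGroup

end Matrix

theorem graph_manifold_rep_abelian_general
    {G : Type*} [Group G] (G₁ G₂ : Subgroup G) (hgen : G₁ ⊔ G₂ = ⊤)
    (f₁ f₂ : G)
    (hf₁c : ∀ g ∈ G₁, f₁ * g = g * f₁)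
    (hf₂c : ∀ g ∈ G₂, f₂ * g = g * f₂)
    (hf₁G₂ : f₁ ∈ G₂)
    (ρ : G →* SpecialLinearGroup (Fin 2) ℂ)
    (h₁ : ρ f₁ ≠ 1) (h₁' : ρ f₁ ≠ -1)
    (h₂ : ρ f₂ ≠ 1) (h₂' : ρ f₂ ≠ -1) :
    ∀ g h : G, ρ g * ρ h = ρ h * ρ g := by
  have hcentral : G₁ ⊔ G₂ ≤ (Subgroup.centralizer {ρ f₁}).comap ρ := by
    refine sup_le (fun g hg => ?_) (fun g hg => ?_) <;>
      rw [Subgroup.mem_comap, Subgroup.mem_centralizer_singleton_iff, eq_comm]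
    · exact (Commute.map (hf₁c g hg) ρ).eq
    · exact SpecialLinearGroup.commute_of_commute_of_ne_one_of_ne_neg_one h₂ h₂'
        (Commute.map (hf₂c f₁ hf₁G₂) ρ) (Commute.map (hf₂c g hg) ρ)
  have hf₁central (g : G) : Commute (ρ f₁) (ρ g) :=
    (Subgroup.mem_centralizer_singleton_iff.mp (hcentral (hgen ▸ Subgroup.mem_top g))).symm
  exact fun g h => SpecialLinearGroup.commute_of_commute_of_ne_one_of_ne_neg_one h₁ h₁'
    (hf₁central g) (hf₁central h)

/-- If a group `G` is generated by subgroups `G₁, G₂`, with `f₁` central in `G₁`,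
`f₂` central in `G₂`, `f₂ ∈ G₁`, `f₁ ∈ G₂`, and `ρ : G → SL₂(ℂ)` sends neither
`f₁` nor `f₂` into `{±I}`, then the image of `ρ` is abelian. -/
theorem graph_manifold_rep_abelian
    {G : Type*} [Group G] (G₁ G₂ : Subgroup G) (hgen : G₁ ⊔ G₂ = ⊤)
    (f₁ f₂ : G)
    (hf₁G₁ : f₁ ∈ G₁) (hf₁c : ∀ g ∈ G₁, f₁ * g = g * f₁)
    (hf₂G₂ : f₂ ∈ G₂) (hf₂c : ∀ g ∈ G₂, f₂ * g = g * f₂)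
    (hf₂G₁ : f₂ ∈ G₁) (hf₁G₂ : f₁ ∈ G₂)
    (ρ : G →* SpecialLinearGroup (Fin 2) ℂ)
    (h₁ : ρ f₁ ≠ 1) (h₁' : ρ f₁ ≠ -1)
    (h₂ : ρ f₂ ≠ 1) (h₂' : ρ f₂ ≠ -1) :
    ∀ g h : G, ρ g * ρ h = ρ h * ρ g :=
  graph_manifold_rep_abelian_general G₁ G₂ hgen f₁ f₂ hf₁c hf₂c hf₁G₂ ρ h₁ h₁' h₂ h₂'
end
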